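/- arXiv:2605.11728 — 5 statements merged into one kernel-verified Lean document; each statement's English description precedes it below -/
import Mathlib

section
/- Fix n ≥ 1, a real n×n matrix A₀ with zero diagonal, and a finite set F of ordered pairs (i,j) with i ≠ j (each pair representing a directed edge j → i). Set A(ε) = A₀ + ε·Σ_{(i,j)∈F} E_ij, and let L(ε) = D(ε) − A(ε) be the Laplacian, where D(ε) is the diagonal matrix with D(ε)_ii = Σ_j A(ε)_ij. Suppose ξ : ℝ → ℝⁿ, y : ℝ → ℝⁿ, and κ : ℝ → ℝ are differentiable at 0 and satisfy, for all ε in a neighborhood of 0: ξ(ε)ᵀ L(ε) = 0, 𝟏ᵀ ξ(ε) = 1, ξ(ε) is entrywise positive, ((Ξ(ε)L(ε) + L(ε)ᵀΞ(ε))/2)·y(ε) = κ(ε)·Ξ(ε)·y(ε), and y(ε)ᵀ Ξ(ε) y(ε) = 1, where Ξ(ε) = diag(ξ(ε)). Then, writing ξ = ξ(0), y = y(0), κ = κ(0), L = L(0), and Ξ′ = diag(ξ′(0)), the derivative of κ at 0 equals κ′(0) = Σ_{(i,j)∈F} ξ_i · y_i · (y_i − y_j) + yᵀ Ξ′ (L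 − κ·I) y. -/
/-!
Pairing the eigen-equation with `y` and using `yᵀ Ξ y = 1` gives `κ = yᵀ Ξ L y` near `0`
(only the symmetric part of `Ξ L` is seen by the quadratic form). Differentiating, the two
terms containing `y'` add up to `2 κ y'ᵀ Ξ y` by the eigen-equation at `0`, and differentiating
the normalisation turns this into `-κ yᵀ Ξ' y` (Hellmann–Feynman). Since `L` is affine in `ε`
with slope the Laplacian of `∑_{(i,j) ∈ F} E_ij`, we get `(Ξ L)' = Ξ' L + Ξ · lap(∑ E_ij)`, and
`yᵀ Ξ lap(E_ij) y = ξ_i y_i (y_i - y_j)`.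
-/

open Matrix Filter Topology

namespace Matrix

variable {ι R : Type*} [Fintype ι] [DecidableEq ι] [CommRing R]

def laplacian (A : Matrix ι ι R) : Matrix ι ι R :=
  diagonal (fun i => ∑ j, A i j) - A

theorem laplacian_add_smul (A B : Matrix ι ι R) (c : R) :
    laplacian (A + c • B) = laplacian A + c • laplacian B := by
  ext i j
  by_cases h : i = j <;>
    simp [laplacian, h, Finset.sum_add_distrib, ← Finset.mul_sum] <;> ring

theorem dotProduct_diagonal_mul_laplacian_mulVec (ξ y : ι → R) (B : Matrix ι ι R) :
    y ⬝ᵥ ((diagonal ξ * laplacian B) *ᵥ y) = ∑ i, ∑ j, B i j * (ξ i * y i * (y i - y j)) := by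
  simp only [laplacian, dotProduct, mulVec, diagonal_mul, sub_apply, diagonal_apply,
    sub_mul, mul_sub, Finset.sum_sub_distrib, ite_mul, zero_mul, mul_ite, mul_zero,
    Finset.sum_ite_eq, Finset.mem_univ, if_true, Finset.mul_sum, Finset.sum_mul]
  congr 1 <;> refine Finset.sum_congr rfl fun i _ => Finset.sum_congr rfl fun j _ => ?_ <;> ring

theorem sum_sum_sum_single_mul (F : Finset (ι × ι)) (f : ι → ι → R) :
    ∑ i, ∑ j, (∑ p ∈ F, single p.1 p.2 (1 : R)) i j * f i j = ∑ p ∈ F, f p.1 p.2 := by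
  simp only [sum_apply, Finset.sum_mul]
  rw [Finset.sum_comm]
  refine (Finset.sum_congr rfl fun j _ => Finset.sum_comm).trans ?_
  refine Finset.sum_comm.trans (Finset.sum_congr rfl fun p _ => ?_)
  simp [single_apply, ite_and]

end Matrix

section Derivatives

variable {ι m : Type*} {t : ℝ}

theorem hasDerivAt_dotProduct [Fintype ι] {u v : ℝ → ι → ℝ} {u' v' : ι → ℝ}
    (hu : ∀ i, HasDerivAt (fun s => u s i) (u' i) t)
    (hv : ∀ i, HasDerivAt (fun s => v s i) (v' i) t) :
    HasDerivAt (fun s => u s ⬝ᵥ v s) (u' ⬝ᵥ v t + u t ⬝ᵥ v') t := by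
  simpa only [dotProduct, ← Finset.sum_add_distrib] using
    HasDerivAt.fun_sum fun i _ => (hu i).fun_mul (hv i)

theorem hasDerivAt_mulVec_apply [Fintype ι] {M : ℝ → Matrix m ι ℝ} {M' : Matrix m ι ℝ}
    {v : ℝ → ι → ℝ} {v' : ι → ℝ} (hM : ∀ i j, HasDerivAt (fun s => M s i j) (M' i j) t)
    (hv : ∀ i, HasDerivAt (fun s => v s i) (v' i) t) (i : m) :
    HasDerivAt (fun s => (M s *ᵥ v s) i) ((M' *ᵥ v t + M t *ᵥ v') i) t :=
  hasDerivAt_dotProduct (hM i) hv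

theorem hasDerivAt_diagonal_mul_apply [Fintype ι] [DecidableEq ι] {d : ℝ → ι → ℝ} {d' : ι → ℝ}
    {M : ℝ → Matrix ι m ℝ} {M' : Matrix ι m ℝ}
    (hd : ∀ i, HasDerivAt (fun s => d s i) (d' i) t)
    (hM : ∀ i j, HasDerivAt (fun s => M s i j) (M' i j) t) (i : ι) (j : m) :
    HasDerivAt (fun s => (diagonal (d s) * M s) i j)
      ((diagonal d' * M t + diagonal (d t) * M') i j) t := by
  simpa only [diagonal_mul, Matrix.add_apply] using (hd i).fun_mul (hM i j)

theorem hasDerivAt_diagonal_apply [DecidableEq ι] {d : ℝ → ι → ℝ} {d' : ι → ℝ}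
    (hd : ∀ i, HasDerivAt (fun s => d s i) (d' i) t) (i j : ι) :
    HasDerivAt (fun s => diagonal (d s) i j) (diagonal d' i j) t := by
  by_cases h : i = j
  · subst h; simpa using hd i
  · simpa [h] using hasDerivAt_const t (0 : ℝ)

theorem hasDerivAt_generalized_eigenvalue [Fintype ι] {N W : ℝ → Matrix ι ι ℝ}
    {N' W' : Matrix ι ι ℝ} {y : ℝ → ι → ℝ} {y' : ι → ℝ} {κ : ℝ → ℝ}
    (hN : ∀ i j, HasDerivAt (fun s => N s i j) (N' i j) t)
    (hW : ∀ i j, HasDerivAt (fun s => W s i j) (W' i j) t)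
    (hy : ∀ i, HasDerivAt (fun s => y s i) (y' i) t) (hWt : (W t).IsSymm)
    (heig : ∀ᶠ s in 𝓝 t, ((1 / 2 : ℝ) • (N s + (N s)ᵀ)) *ᵥ y s = κ s • (W s *ᵥ y s))
    (hnorm : ∀ᶠ s in 𝓝 t, y s ⬝ᵥ (W s *ᵥ y s) = 1) :
    HasDerivAt κ (y t ⬝ᵥ (N' *ᵥ y t) - κ t * y t ⬝ᵥ (W' *ᵥ y t)) t := by
  have hκ : (fun s => y s ⬝ᵥ (N s *ᵥ y s)) =ᶠ[𝓝 t] κ := by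
    filter_upwards [heig, hnorm] with s he hn
    have hq := congrArg (y s ⬝ᵥ ·) he
    simp only [smul_mulVec, add_mulVec, dotProduct_smul, dotProduct_add,
      dotProduct_transpose_mulVec, hn, smul_eq_mul] at hq
    linear_combination hq
  have hnorm' : y' ⬝ᵥ (W t *ᵥ y t) + y t ⬝ᵥ (W' *ᵥ y t + W t *ᵥ y') = 0 :=
    (hasDerivAt_dotProduct hy (hasDerivAt_mulVec_apply hW hy)).unique
      ((hasDerivAt_const t (1 : ℝ)).congr_of_eventuallyEq hnorm)
  have heig' := congrArg (y' ⬝ᵥ ·) heig.self_of_nhds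
  simp only [smul_mulVec, add_mulVec, dotProduct_smul, dotProduct_add, dotProduct_transpose_mulVec,
    smul_eq_mul] at heig'
  refine ((hasDerivAt_dotProduct hy (hasDerivAt_mulVec_apply hN hy)).congr_of_eventuallyEq
    hκ.symm).congr_deriv ?_
  have hWy : y t ⬝ᵥ (W t *ᵥ y') = y' ⬝ᵥ (W t *ᵥ y t) := by
    rw [← dotProduct_transpose_mulVec, hWt.eq]
  rw [dotProduct_add, hWy] at hnorm'
  rw [dotProduct_add]
  linear_combination heig' * 2 + κ t * hnorm'

end Derivatives

theorem stmt1_general (n : ℕ)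
    (A₀ : Matrix (Fin n) (Fin n) ℝ)
    (F : Finset (Fin n × Fin n))
    (A : ℝ → Matrix (Fin n) (Fin n) ℝ)
    (hA : ∀ ε, A ε = A₀ + ε • ∑ p ∈ F, Matrix.single p.1 p.2 (1 : ℝ))
    (L : ℝ → Matrix (Fin n) (Fin n) ℝ)
    (hL : ∀ ε, L ε = Matrix.diagonal (fun i => ∑ j, A ε i j) - A ε)
    (ξ y : ℝ → Fin n → ℝ) (ξ' y' : Fin n → ℝ) (κ : ℝ → ℝ) (κ' : ℝ)
    (hξd : ∀ i, HasDerivAt (fun ε => ξ ε i) (ξ' i) 0)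
    (hyd : ∀ i, HasDerivAt (fun ε => y ε i) (y' i) 0)
    (hκd : HasDerivAt κ κ' 0)
    (heig : ∀ᶠ ε in nhds (0 : ℝ),
      (((1 : ℝ)/2) • (Matrix.diagonal (ξ ε) * L ε + (L ε)ᵀ * Matrix.diagonal (ξ ε))) *ᵥ y ε
        = κ ε • (Matrix.diagonal (ξ ε) *ᵥ y ε))
    (hnorm2 : ∀ᶠ ε in nhds (0 : ℝ), y ε ⬝ᵥ (Matrix.diagonal (ξ ε) *ᵥ y ε) = 1) :
    κ' = (∑ p ∈ F, ξ 0 p.1 * y 0 p.1 * (y 0 p.1 - y 0 p.2))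
        + y 0 ⬝ᵥ ((Matrix.diagonal ξ' * (L 0 - κ 0 • 1)) *ᵥ y 0) := by
  set B := ∑ p ∈ F, Matrix.single p.1 p.2 (1 : ℝ)
  have hLB : ∀ ε, L ε = laplacian A₀ + ε • laplacian B := fun ε =>
    (hL ε).trans (by rw [hA]; exact laplacian_add_smul A₀ B ε)
  have hLd : ∀ i j, HasDerivAt (fun ε => L ε i j) (laplacian B i j) 0 := fun i j => by
    simpa [hLB] using ((hasDerivAt_id 0).mul_const (laplacian B i j)).const_add (laplacian A₀ i j)
  have heig' : ∀ᶠ ε in nhds (0 : ℝ), ((1 / 2 : ℝ) • (diagonal (ξ ε) * L ε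
      + (diagonal (ξ ε) * L ε)ᵀ)) *ᵥ y ε = κ ε • (diagonal (ξ ε) *ᵥ y ε) := by
    simpa only [transpose_mul, diagonal_transpose] using heig
  have hκ' := hκd.unique <| hasDerivAt_generalized_eigenvalue
    (hasDerivAt_diagonal_mul_apply hξd hLd) (hasDerivAt_diagonal_apply hξd) hyd
    (isSymm_diagonal (ξ 0)) heig' hnorm2
  rw [hκ', add_mulVec, dotProduct_add, dotProduct_diagonal_mul_laplacian_mulVec,
    sum_sum_sum_single_mul, mul_sub, sub_mulVec, dotProduct_sub, Matrix.mul_smul, mul_one,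
    smul_mulVec, dotProduct_smul, smul_eq_mul]
  ring

/-- First-order perturbation formula for the generalized algebraic connectivity κ
under an edge-weight perturbation supported on a directed edge set F:
κ′(0) equals the directed cut-energy term plus the stationary redistribution term. -/
theorem stmt1 (n : ℕ) (hn : 1 ≤ n)
    (A₀ : Matrix (Fin n) (Fin n) ℝ) (hA₀ : ∀ i, A₀ i i = 0)
    (F : Finset (Fin n × Fin n)) (hF : ∀ p ∈ F, p.1 ≠ p.2)
    (A : ℝ → Matrix (Fin n) (Fin n) ℝ)
    (hA : ∀ ε, A ε = A₀ + ε • ∑ p ∈ F, Matrix.single p.1 p.2 (1 : ℝ))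
    (L : ℝ → Matrix (Fin n) (Fin n) ℝ)
    (hL : ∀ ε, L ε = Matrix.diagonal (fun i => ∑ j, A ε i j) - A ε)
    (ξ y : ℝ → Fin n → ℝ) (ξ' y' : Fin n → ℝ) (κ : ℝ → ℝ) (κ' : ℝ)
    (hξd : ∀ i, HasDerivAt (fun ε => ξ ε i) (ξ' i) 0)
    (hyd : ∀ i, HasDerivAt (fun ε => y ε i) (y' i) 0)
    (hκd : HasDerivAt κ κ' 0)
    (hstat : ∀ᶠ ε in nhds (0 : ℝ), (L ε)ᵀ *ᵥ ξ ε = 0)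
    (hnorm1 : ∀ᶠ ε in nhds (0 : ℝ), ∑ i, ξ ε i = 1)
    (hpos : ∀ᶠ ε in nhds (0 : ℝ), ∀ i, 0 < ξ ε i)
    (heig : ∀ᶠ ε in nhds (0 : ℝ),
      (((1 : ℝ)/2) • (Matrix.diagonal (ξ ε) * L ε + (L ε)ᵀ * Matrix.diagonal (ξ ε))) *ᵥ y ε
        = κ ε • (Matrix.diagonal (ξ ε) *ᵥ y ε))
    (hnorm2 : ∀ᶠ ε in nhds (0 : ℝ), y ε ⬝ᵥ (Matrix.diagonal (ξ ε) *ᵥ y ε) = 1) :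
    κ' = (∑ p ∈ F, ξ 0 p.1 * y 0 p.1 * (y 0 p.1 - y 0 p.2))
        + y 0 ⬝ᵥ ((Matrix.diagonal ξ' * (L 0 - κ 0 • 1)) *ᵥ y 0) :=
  stmt1_general n A₀ F A hA L hL ξ y ξ' y' κ κ' hξd hyd hκd heig hnorm2
end

section
/- Let L be a real n×n matrix and ξ ∈ ℝⁿ such that L·𝟏 = 0, ξᵀ L = 0, 𝟏ᵀ ξ = 1, and the kernel of Lᵀ is contained in the span of ξ. Then the bordered (n+1)×(n+1) matrix H = [[Lᵀ, 𝟏], [𝟏ᵀ, 0]] (i.e., the block matrix with Lᵀ in the top-left n×n block, the column vector 𝟏 in the top-right, the row vector 𝟏ᵀ in the bottom-left, and scalar 0 in the bottom-right) is invertible. -/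
open Matrix

/-- Invertibility of the bordered matrix [[Lᵀ, 𝟏], [𝟏ᵀ, 0]] when 0 is a
geometrically simple eigenvalue of Lᵀ with normalized left eigenvector ξ. -/
theorem stmt3 (n : ℕ) (hn : 1 ≤ n)
    (L : Matrix (Fin n) (Fin n) ℝ) (ξ : Fin n → ℝ)
    (hL1 : L *ᵥ (fun _ => (1 : ℝ)) = 0)
    (hξL : Lᵀ *ᵥ ξ = 0)
    (hξ1 : ∑ i, ξ i = 1)
    (hker : ∀ v : Fin n → ℝ, Lᵀ *ᵥ v = 0 → ∃ c : ℝ, v = c • ξ) :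
    IsUnit (Matrix.fromBlocks Lᵀ
      (Matrix.of fun (_ : Fin n) (_ : Unit) => (1 : ℝ))
      (Matrix.of fun (_ : Unit) (_ : Fin n) => (1 : ℝ))
      (0 : Matrix Unit Unit ℝ)) := by
  rw [Matrix.isUnit_iff_isUnit_det, isUnit_iff_ne_zero]
  intro hdet
  obtain ⟨w, hw0, hw⟩ := (Matrix.exists_mulVec_eq_zero_iff).2 hdet
  set v : Fin n → ℝ := fun i => w (Sum.inl i) with hv
  set t : ℝ := w (Sum.inr ()) with htdef
  have htop : ∀ i, (Lᵀ *ᵥ v) i + t = 0 := by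
    intro i
    have h := congrFun hw (Sum.inl i)
    simpa [Matrix.fromBlocks, Matrix.mulVec, dotProduct, Fintype.sum_sum_type, v, t]
      using h
  have hbot : ∑ j, v j = 0 := by
    have h := congrFun hw (Sum.inr ())
    simpa [Matrix.fromBlocks, Matrix.mulVec, dotProduct, Fintype.sum_sum_type, v, t]
      using h
  have hLv_sum : ∑ i, (Lᵀ *ᵥ v) i = 0 := by
    have h : ∑ i, (Lᵀ *ᵥ v) i = ∑ j, v j * (L *ᵥ (fun _ => (1 : ℝ))) j := by
      simp only [Matrix.mulVec, dotProduct, Matrix.transpose_apply, mul_one]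
      rw [Finset.sum_comm]
      refine Finset.sum_congr rfl fun j _ => ?_
      rw [Finset.mul_sum]
      exact Finset.sum_congr rfl fun i _ => mul_comm _ _
    rw [h, hL1]
    simp
  have hsum : ∑ i, ((Lᵀ *ᵥ v) i + t) = 0 := by simp [htop]
  have ht : t = 0 := by
    rw [Finset.sum_add_distrib, hLv_sum, zero_add, Finset.sum_const,
      Finset.card_univ, Fintype.card_fin, nsmul_eq_mul] at hsum
    have hn' : (n : ℝ) ≠ 0 := Nat.cast_ne_zero.2 (by omega)
    exact (mul_eq_zero.1 hsum).resolve_left hn'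
  have hLv : Lᵀ *ᵥ v = 0 := by
    funext i
    have h := htop i
    rw [ht, add_zero] at h
    simpa using h
  obtain ⟨c, hc⟩ := hker v hLv
  have hc0 : c = 0 := by
    have h : ∑ j, v j = c := by
      rw [hc]
      simp [← Finset.mul_sum, hξ1]
    rw [hbot] at h
    exact h.symm
  apply hw0
  funext x
  cases x with
  | inl i => have : v i = 0 := by rw [hc, hc0]; simp
             simpa [v] using this
  | inr u => cases u; simpa [t] using ht
end

section
/- Let L and ΔL be real n×n matrices with L·𝟏 = 0 and ΔL·𝟏 = 0, and set L(ε) = L + ε·ΔL. Suppose there exists ξ₀ ∈ ℝⁿ, entrywise positive, with ξ₀ᵀ L = 0, 𝟏ᵀ ξ₀ = 1, and ker(Lᵀ) ⊆ span{ξ₀}. Then there exist ε₀ > 0 and a function ξ : ℝ → ℝⁿ, real-analytic on the interval (−ε₀, ε₀) with ξ(0) = ξ₀, such that for every ε ∈ (−ε₀, ε₀): ξ(ε)ᵀ L(ε) = 0, 𝟏ᵀ ξ(ε) = 1, and ξ(ε) is entrywise positive; moreover ξ(ε) is the unique vector satisfying ξ(ε)ᵀ L(ε) = 0 and 𝟏ᵀ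 ξ(ε) = 1 for each such ε. -/
/-!
Instead of the bordered matrix `[[Lᵀ, 𝟏], [𝟏ᵀ, 0]]` we use `B(ε) = L(ε)ᵀ + 𝟏𝟏ᵀ`. Since
`L(ε) 𝟏 = 0`, the entries of `L(ε)ᵀ v` sum to zero, so summing the equation `B(ε) v = 𝟏` gives
`n · 𝟏ᵀv = n`; hence `B(ε) v = 𝟏` says exactly that `v` is a normalized left zero-eigenvector.
At `ε = 0` the hypothesis `ker Lᵀ ⊆ span ξ₀` makes `B(0)` injective, so `ξ(ε) = B(ε)⁻¹ 𝟏` is the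
unique such vector wherever `det B(ε) ≠ 0`, an open set containing `0`. By Cramer's rule its
entries are quotients of polynomials in `ε`, hence analytic there, and positivity of `ξ₀`
persists near `0` by continuity.
-/

open Matrix Filter Topology

section Analytic

variable {𝕜 E m : Type*} [NontriviallyNormedField 𝕜] [NormedAddCommGroup E] [NormedSpace 𝕜 E]
  [Fintype m] [DecidableEq m] {M : E → Matrix m m 𝕜} {x : E}

theorem analyticAt_det (hM : ∀ i j, AnalyticAt 𝕜 (fun y => M y i j) x) :
    AnalyticAt 𝕜 (fun y => (M y).det) x := by
  simp_rw [det_apply, Units.smul_def, zsmul_eq_mul]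
  exact Finset.analyticAt_fun_sum _ fun σ _ =>
    analyticAt_const.mul (Finset.analyticAt_fun_prod _ fun i _ => hM (σ i) i)

theorem inv_mulVec_apply_eq_cramer {A : Matrix m m 𝕜} (hA : A.det ≠ 0) (b : m → 𝕜) (i : m) :
    (A⁻¹ *ᵥ b) i = (A.det)⁻¹ * (A.updateCol i b).det := by
  rw [← cramer_apply, ← det_smul_inv_mulVec_eq_cramer A b (isUnit_iff_ne_zero.mpr hA)]
  simp [hA]

theorem analyticAt_inv_mulVec (hM : ∀ i j, AnalyticAt 𝕜 (fun y => M y i j) x)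
    (hdet : (M x).det ≠ 0) (b : m → 𝕜) :
    AnalyticAt 𝕜 (fun y => (M y)⁻¹ *ᵥ b) x := by
  have hcol : ∀ i, AnalyticAt 𝕜 (fun y => ((M y).updateCol i b).det) x := fun i =>
    analyticAt_det fun k l => by
      simp only [updateCol_apply]
      split_ifs
      exacts [analyticAt_const, hM k l]
  have hevent : ∀ᶠ y in 𝓝 x, (M y).det ≠ 0 :=
    (analyticAt_det hM).continuousAt.eventually_ne hdet
  refine AnalyticAt.pi fun i => ?_
  refine (((analyticAt_det hM).inv hdet).mul (hcol i)).congr ?_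
  filter_upwards [hevent] with y hy
  exact (inv_mulVec_apply_eq_cramer hy b i).symm

end Analytic

namespace Matrix

variable {R m : Type*} [Field R] [Fintype m] {M : Matrix m m R}

def transposeAddOnes (M : Matrix m m R) : Matrix m m R := Mᵀ + of fun _ _ => 1

noncomputable def stationaryVector [DecidableEq m] (M : Matrix m m R) : m → R :=
  M.transposeAddOnes⁻¹ *ᵥ 1

theorem transposeAddOnes_mulVec (M : Matrix m m R) (v : m → R) :
    M.transposeAddOnes *ᵥ v = Mᵀ *ᵥ v + (∑ i, v i) • 1 := by
  ext i
  simp [transposeAddOnes, mulVec, dotProduct, add_mul, Finset.sum_add_distrib]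

theorem sum_transpose_mulVec_eq_zero (hM : M *ᵥ 1 = 0) (v : m → R) :
    ∑ i, (Mᵀ *ᵥ v) i = 0 := by
  rw [← one_dotProduct, dotProduct_mulVec, vecMul_transpose, hM, zero_dotProduct]

theorem transposeAddOnes_mulVec_eq_smul_one_iff [CharZero R] [Nonempty m] (hM : M *ᵥ 1 = 0)
    {v : m → R} {c : R} :
    M.transposeAddOnes *ᵥ v = c • 1 ↔ Mᵀ *ᵥ v = 0 ∧ ∑ i, v i = c := by
  rw [transposeAddOnes_mulVec]
  constructor
  · intro h
    have hsum : ∑ i, v i = c := by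
      have hcard : (Fintype.card m : R) ≠ 0 := Nat.cast_ne_zero.mpr Fintype.card_ne_zero
      have := congrArg (fun w => ∑ i, w i) h
      simp only [Pi.add_apply, Finset.sum_add_distrib, sum_transpose_mulVec_eq_zero hM,
        Pi.smul_apply, Pi.one_apply, smul_eq_mul, mul_one, Finset.sum_const, Finset.card_univ,
        nsmul_eq_mul, zero_add] at this
      exact mul_left_cancel₀ hcard (by linear_combination this)
    rw [hsum, add_eq_right] at h
    exact ⟨h, hsum⟩
  · rintro ⟨h, rfl⟩
    rw [h, zero_add]

theorem det_transposeAddOnes_ne_zero [DecidableEq m] [CharZero R] [Nonempty m]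
    (hM : M *ᵥ 1 = 0) {ξ : m → R} (hξ : ∑ i, ξ i ≠ 0)
    (hker : ∀ v, Mᵀ *ᵥ v = 0 → ∃ c : R, v = c • ξ) :
    M.transposeAddOnes.det ≠ 0 := by
  intro hdet
  obtain ⟨v, hv, hBv⟩ := exists_mulVec_eq_zero_iff.mpr hdet
  obtain ⟨hMv, hsum⟩ :=
    (transposeAddOnes_mulVec_eq_smul_one_iff hM (c := 0)).mp (by rw [hBv, zero_smul])
  obtain ⟨c, rfl⟩ := hker v hMv
  simp only [Pi.smul_apply, smul_eq_mul, ← Finset.mul_sum, mul_eq_zero, hξ, or_false] at hsum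
  exact hv (by rw [hsum, zero_smul])

theorem eq_stationaryVector_iff [DecidableEq m] [CharZero R] [Nonempty m] (hM : M *ᵥ 1 = 0)
    (hdet : M.transposeAddOnes.det ≠ 0) {v : m → R} :
    v = M.stationaryVector ↔ Mᵀ *ᵥ v = 0 ∧ ∑ i, v i = 1 := by
  have hunit : IsUnit M.transposeAddOnes.det := isUnit_iff_ne_zero.mpr hdet
  rw [← transposeAddOnes_mulVec_eq_smul_one_iff hM, one_smul, stationaryVector]
  constructor
  · rintro rfl
    rw [mulVec_mulVec, mul_nonsing_inv _ hunit, one_mulVec]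
  · intro h
    rw [← h, mulVec_mulVec, nonsing_inv_mul _ hunit, one_mulVec]

end Matrix

/-- Analyticity of the normalized left zero-eigenvector (stationary distribution)
of the perturbed Laplacian L(ε) = L + ε·ΔL. -/
theorem stmt4 (n : ℕ) (hn : 1 ≤ n)
    (L ΔL : Matrix (Fin n) (Fin n) ℝ)
    (hL1 : L *ᵥ (fun _ => (1 : ℝ)) = 0)
    (hΔL1 : ΔL *ᵥ (fun _ => (1 : ℝ)) = 0)
    (ξ₀ : Fin n → ℝ) (hpos : ∀ i, 0 < ξ₀ i)
    (hstat : Lᵀ *ᵥ ξ₀ = 0) (hnorm : ∑ i, ξ₀ i = 1)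
    (hker : ∀ v : Fin n → ℝ, Lᵀ *ᵥ v = 0 → ∃ c : ℝ, v = c • ξ₀) :
    ∃ ε₀ > (0 : ℝ), ∃ ξ : ℝ → Fin n → ℝ,
      AnalyticOn ℝ ξ (Set.Ioo (-ε₀) ε₀) ∧ ξ 0 = ξ₀ ∧
      ∀ ε ∈ Set.Ioo (-ε₀) ε₀,
        ((L + ε • ΔL)ᵀ *ᵥ ξ ε = 0 ∧ (∑ i, ξ ε i = 1) ∧ (∀ i, 0 < ξ ε i)) ∧
        (∀ η : Fin n → ℝ, (L + ε • ΔL)ᵀ *ᵥ η = 0 → (∑ i, η i = 1) → η = ξ ε) := by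
  have : Nonempty (Fin n) := ⟨⟨0, hn⟩⟩
  have hM : ∀ ε : ℝ, (L + ε • ΔL) *ᵥ 1 = 0 := fun ε => by
    rw [Pi.one_def, add_mulVec, smul_mulVec, hL1, hΔL1, smul_zero, add_zero]
  have hentries : ∀ i j x, AnalyticAt ℝ (fun ε : ℝ => (L + ε • ΔL).transposeAddOnes i j) x := by
    intro i j x
    simp only [transposeAddOnes, Matrix.add_apply, transpose_apply, Matrix.smul_apply,
      smul_eq_mul, of_apply]
    fun_prop
  set S := {ε : ℝ | (L + ε • ΔL).transposeAddOnes.det ≠ 0}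
  set ξ := fun ε : ℝ => (L + ε • ΔL).stationaryVector
  have hξ : AnalyticOnNhd ℝ ξ S := fun x hx => analyticAt_inv_mulVec (hentries · · x) hx 1
  have hdet0 : (0 : ℝ) ∈ S :=
    det_transposeAddOnes_ne_zero (hM 0) (hnorm ▸ one_ne_zero) (by simpa using hker)
  have hξ0 : ξ 0 = ξ₀ :=
    ((eq_stationaryVector_iff (hM 0) hdet0).mpr ⟨by simpa using hstat, hnorm⟩).symm
  have hnear : ∀ᶠ ε in 𝓝 0, ε ∈ S ∧ ∀ i, 0 < ξ ε i := by
    refine ((analyticAt_det (hentries · · 0)).continuousAt.eventually_ne hdet0).and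
      (eventually_all.mpr fun i => ?_)
    exact ((continuous_apply i).continuousAt.comp (hξ 0 hdet0).continuousAt).eventually
      (eventually_gt_nhds (by simpa [hξ0] using hpos i))
  obtain ⟨ε₀, hε₀, hball⟩ := Metric.eventually_nhds_iff_ball.mp hnear
  rw [Real.ball_eq_Ioo, zero_sub, zero_add] at hball
  refine ⟨ε₀, hε₀, ξ, (hξ.mono fun ε hε => (hball ε hε).1).analyticOn, hξ0, fun ε hε => ?_⟩
  obtain ⟨hdet, hξpos⟩ := hball ε hε
  have hspec : ∀ η, η = ξ ε ↔ _ := fun η => eq_stationaryVector_iff (hM ε) hdet (v := η)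
  exact ⟨⟨((hspec _).mp rfl).1, ((hspec _).mp rfl).2, hξpos⟩,
    fun η hη hη1 => (hspec η).mpr ⟨hη, hη1⟩⟩
end

section
/- Let L be a real n×n matrix, Ξ an invertible diagonal real n×n matrix, κ ∈ ℝ, and y ∈ ℝⁿ such that ((ΞL + LᵀΞ)/2)·y = κ·Ξ·y. Let Ξ′ be any diagonal real n×n matrix, and define C = ΞL − LᵀΞ and D = Ξ′·Ξ⁻¹. Then the stationary redistribution term R := yᵀ Ξ′ (L − κ·I) y satisfies R = (1/2)·yᵀ D C y. -/
open Matrix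

/-- The stationary redistribution term R = yᵀ Ξ′ (L − κI) y equals (1/2)·yᵀ D C y,
where C = ΞL − LᵀΞ and D = Ξ′Ξ⁻¹. -/
theorem stmt6 (n : ℕ)
    (L : Matrix (Fin n) (Fin n) ℝ) (ξ : Fin n → ℝ) (hξ : ∀ i, ξ i ≠ 0)
    (κ : ℝ) (y : Fin n → ℝ)
    (heig : (((1 : ℝ)/2) • (Matrix.diagonal ξ * L + Lᵀ * Matrix.diagonal ξ)) *ᵥ y
      = κ • (Matrix.diagonal ξ *ᵥ y))
    (ξ' : Fin n → ℝ)
    (C D : Matrix (Fin n) (Fin n) ℝ)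
    (hC : C = Matrix.diagonal ξ * L - Lᵀ * Matrix.diagonal ξ)
    (hD : D = Matrix.diagonal ξ' * (Matrix.diagonal ξ)⁻¹) :
    y ⬝ᵥ ((Matrix.diagonal ξ' * (L - κ • 1)) *ᵥ y)
      = ((1 : ℝ)/2) * (y ⬝ᵥ ((D * C) *ᵥ y)) := by
  have hinv : (Matrix.diagonal ξ)⁻¹ * Matrix.diagonal ξ = 1 := by
    apply Matrix.nonsing_inv_mul
    rw [Matrix.det_diagonal]
    exact (Finset.prod_ne_zero_iff.mpr (fun i _ => hξ i)).isUnit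
  -- (ΞL - κΞ) y = (1/2) C y
  have h1 : (Matrix.diagonal ξ * L - κ • Matrix.diagonal ξ) *ᵥ y
      = ((1:ℝ)/2) • (C *ᵥ y) := by
    rw [hC]
    ext i
    have := congrFun heig i
    simp [Matrix.sub_mulVec, Matrix.add_mulVec, Matrix.smul_mulVec] at this ⊢
    linarith
  -- Ξ'(L - κ1) = D * (ΞL - κΞ)
  have h2 : Matrix.diagonal ξ' * (L - κ • 1)
      = D * (Matrix.diagonal ξ * L - κ • Matrix.diagonal ξ) := by
    rw [hD, Matrix.mul_assoc]
    congr 1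
    simp [Matrix.mul_sub, ← Matrix.mul_assoc, hinv, Matrix.mul_smul]
  rw [h2, ← Matrix.mulVec_mulVec, h1, Matrix.mulVec_smul, dotProduct_smul,
    Matrix.mulVec_mulVec]
  simp
end

section
/- Let L be a real n×n matrix, Ξ an invertible diagonal real n×n matrix, κ ∈ ℝ, and y ∈ ℝⁿ such that ((ΞL + LᵀΞ)/2)·y = κ·Ξ·y. If ΞL = LᵀΞ (the detailed-balance condition), then for every diagonal real n×n matrix Ξ′ the stationary redistribution term vanishes: yᵀ Ξ′ (L − κ·I) y = 0. -/
open Matrix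

/-- Under the detailed-balance condition ΞL = LᵀΞ, the stationary redistribution
term vanishes for every diagonal Ξ′. -/
theorem stmt7 (n : ℕ)
    (L : Matrix (Fin n) (Fin n) ℝ) (ξ : Fin n → ℝ) (hξ : ∀ i, ξ i ≠ 0)
    (κ : ℝ) (y : Fin n → ℝ)
    (heig : (((1 : ℝ)/2) • (Matrix.diagonal ξ * L + Lᵀ * Matrix.diagonal ξ)) *ᵥ y
      = κ • (Matrix.diagonal ξ *ᵥ y))
    (hdb : Matrix.diagonal ξ * L = Lᵀ * Matrix.diagonal ξ) :
    ∀ ξ' : Fin n → ℝ,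
      y ⬝ᵥ ((Matrix.diagonal ξ' * (L - κ • 1)) *ᵥ y) = 0 := by
  intro ξ'
  have h1 : (Matrix.diagonal ξ * L) *ᵥ y = κ • (Matrix.diagonal ξ *ᵥ y) := by
    rw [← heig, hdb]
    rw [show Lᵀ * Matrix.diagonal ξ + Lᵀ * Matrix.diagonal ξ
      = (2 : ℝ) • (Lᵀ * Matrix.diagonal ξ) by rw [two_smul], smul_smul]
    norm_num
  have h2 : L *ᵥ y = κ • y := by
    funext i
    have := congrFun h1 i
    simp [← mulVec_mulVec, mulVec_diagonal] at this ⊢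
    rw [mul_left_comm] at this
    exact mul_left_cancel₀ (hξ i) this
  have h3 : (L - κ • 1) *ᵥ y = 0 := by
    rw [sub_mulVec, h2]
    simp [smul_mulVec]
  rw [← mulVec_mulVec, h3]
  simp
end
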